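/- Let ψ : [0,∞) → ℝ be continuous with ψ(t) > 0 for all t ≥ t̄, and assume ∫₀^∞ ψ(t) dt = ∞. Let g₁, g₂ : [0,∞) → [0,∞) be continuous with g₁(t)/ψ(t) → 0 as t → ∞ and ∫₀^∞ g₂ < ∞. Then for every ρ > 0, t₀ ≥ t̄, and α > 0, there exists T > 0 such that whenever 0 ≤ z₀ < α, the solution z(t) = z₀ e^{−∫_{t₀}^t ψ} + ∫_{t₀}^t (g₁(τ)+g₂(τ)) e^{−∫_τ^t ψ(λ)dλ} dτ of z' = −ψ(t) z + g₁(t) + g₂(t), z(t₀) = z₀, satisfies 0 ≤ z(t) < ρ for all t ≥ t₀ + T. -/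

import Mathlib

/-!
Write `K(τ, t) = exp (-∫_τ^t ψ)`; it is at most `1` once `ψ ≥ 0`, and `∂_τ K(τ, t) = ψ τ K(τ, t)`.
By the flow property `z(t) = z(s) K(s, t) + ∫_s^t (g₁ + g₂) K(·, t)` we may restart at a time `s`
beyond which `g₁ ≤ (ρ/4) ψ` and every integral of `g₂` over `[s, t]` is below `ρ/4`. Then the `g₁`
part contributes at most `(ρ/4) ∫_s^t ψ K(·, t) = (ρ/4) (1 - K(s, t))`, the `g₂` part less than
`ρ/4`, and `z(s) ≤ α + ∫_{t₀}^s (g₁ + g₂)` is bounded uniformly in `z₀ < α`, while `K(s, t) → 0`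
because `∫ ψ` diverges.
-/

open Real Filter intervalIntegral Topology Set
open MeasureTheory (volume IntegrableOn)

noncomputable def variationOfConstants (ψ g : ℝ → ℝ) (t₀ z₀ t : ℝ) : ℝ :=
  z₀ * exp (-∫ τ in t₀..t, ψ τ) + ∫ τ in t₀..t, g τ * exp (-∫ l in τ..t, ψ l)

section Kernel

variable {ψ : ℝ → ℝ}

theorem hasDerivAt_exp_neg_integral (hψ : Continuous ψ) (τ t : ℝ) :
    HasDerivAt (fun u => exp (-∫ l in u..t, ψ l)) (ψ τ * exp (-∫ l in τ..t, ψ l)) τ := by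
  have := (integral_hasDerivAt_left (hψ.intervalIntegrable τ t)
    (hψ.stronglyMeasurableAtFilter _ _) hψ.continuousAt).neg.exp
  simpa [mul_comm] using this

theorem continuous_exp_neg_integral (hψ : Continuous ψ) (t : ℝ) :
    Continuous fun u => exp (-∫ l in u..t, ψ l) :=
  continuous_iff_continuousAt.2 fun τ => (hasDerivAt_exp_neg_integral hψ τ t).continuousAt

theorem exp_neg_integral_le_one {τ t : ℝ} (hτt : τ ≤ t) (hψ : ∀ l ∈ Icc τ t, 0 ≤ ψ l) :
    exp (-∫ l in τ..t, ψ l) ≤ 1 :=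
  exp_le_one_iff.2 (neg_nonpos.2 (integral_nonneg hτt hψ))

theorem exp_neg_integral_mul_exp_neg_integral (hψ : Continuous ψ) (a b c : ℝ) :
    exp (-∫ l in a..b, ψ l) * exp (-∫ l in b..c, ψ l) = exp (-∫ l in a..c, ψ l) := by
  rw [← exp_add, ← integral_add_adjacent_intervals (hψ.intervalIntegrable a b)
    (hψ.intervalIntegrable b c), neg_add]

theorem integral_mul_exp_neg_integral (hψ : Continuous ψ) (s t : ℝ) :
    ∫ τ in s..t, ψ τ * exp (-∫ l in τ..t, ψ l) = 1 - exp (-∫ l in s..t, ψ l) := by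
  rw [integral_eq_sub_of_hasDerivAt (fun τ _ => hasDerivAt_exp_neg_integral hψ τ t)
    ((hψ.mul (continuous_exp_neg_integral hψ t)).intervalIntegrable s t)]
  simp

theorem tendsto_exp_neg_integral_atTop (hψ : Continuous ψ)
    (hdiv : Tendsto (fun t => ∫ l in (0:ℝ)..t, ψ l) atTop atTop) (s : ℝ) :
    Tendsto (fun t => exp (-∫ l in s..t, ψ l)) atTop (𝓝 0) := by
  have hdiv_s : Tendsto (fun t => ∫ l in s..t, ψ l) atTop atTop := by
    refine (tendsto_atTop_add_const_left atTop (-∫ l in (0:ℝ)..s, ψ l) hdiv).congr fun t => ?_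
    rw [← integral_add_adjacent_intervals (hψ.intervalIntegrable 0 s) (hψ.intervalIntegrable s t)]
    ring
  exact tendsto_exp_atBot.comp (tendsto_neg_atTop_atBot.comp hdiv_s)

theorem integral_mul_exp_neg_integral_le (hψ : Continuous ψ) {g h : ℝ → ℝ} {s t ε : ℝ}
    (hg : IntervalIntegrable g volume s t) (hh : IntervalIntegrable h volume s t)
    (hst : s ≤ t) (hε : 0 ≤ ε) (hψ_nonneg : ∀ τ ∈ Icc s t, 0 ≤ ψ τ)
    (hh_nonneg : ∀ τ ∈ Icc s t, 0 ≤ h τ) (hgh : ∀ τ ∈ Icc s t, g τ ≤ ε * ψ τ + h τ) :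
    ∫ τ in s..t, g τ * exp (-∫ l in τ..t, ψ l) ≤ ε + ∫ τ in s..t, h τ := by
  have hK := (continuous_exp_neg_integral hψ t).continuousOn (s := uIcc s t)
  have hψK := ((hψ.intervalIntegrable (μ := volume) s t).mul_continuousOn hK).const_mul ε
  calc ∫ τ in s..t, g τ * exp (-∫ l in τ..t, ψ l)
      ≤ ∫ τ in s..t, (ε * (ψ τ * exp (-∫ l in τ..t, ψ l)) + h τ) := by
        refine integral_mono_on hst (hg.mul_continuousOn hK) (hψK.add hh) fun τ hτ => ?_
        have hK_le := exp_neg_integral_le_one hτ.2 fun l hl => hψ_nonneg l ⟨hτ.1.trans hl.1, hl.2⟩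
        nlinarith [mul_le_mul_of_nonneg_right (hgh τ hτ) (exp_pos (-∫ l in τ..t, ψ l)).le,
          mul_le_mul_of_nonneg_left hK_le (hh_nonneg τ hτ)]
    _ = ε * (1 - exp (-∫ l in s..t, ψ l)) + ∫ τ in s..t, h τ := by
        rw [integral_add hψK hh, integral_const_mul, integral_mul_exp_neg_integral hψ]
    _ ≤ ε + ∫ τ in s..t, h τ := by nlinarith [exp_pos (-∫ l in s..t, ψ l)]

end Kernel

theorem eventually_forall_abs_integral_lt {g : ℝ → ℝ} {a ε : ℝ} (hg : IntegrableOn g (Ioi a))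
    (hε : 0 < ε) : ∀ᶠ s in atTop, ∀ t ≥ s, |∫ τ in s..t, g τ| < ε := by
  have hlim := MeasureTheory.intervalIntegral_tendsto_integral_Ioi a hg tendsto_id
  have hnear := eventually_forall_ge_atTop.2 (hlim.eventually (Metric.ball_mem_nhds _ (half_pos hε)))
  filter_upwards [hnear, eventually_ge_atTop a] with s hs has t hst
  have hint : ∀ u, a ≤ u → IntervalIntegrable g volume a u := fun u hu =>
    (intervalIntegrable_iff_integrableOn_Ioc_of_le hu).2 (hg.mono_set Ioc_subset_Ioi_self)
  rw [← integral_interval_sub_left (hint t (has.trans hst)) (hint s has), ← Real.dist_eq]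
  calc _ ≤ _ := dist_triangle_right _ _ (∫ τ in Ioi a, g τ)
    _ < ε / 2 + ε / 2 := add_lt_add (hs t hst) (hs s le_rfl)
    _ = ε := add_halves ε

section VariationOfConstants

variable {ψ g : ℝ → ℝ} {t₀ z₀ t : ℝ}

theorem variationOfConstants_nonneg (hz₀ : 0 ≤ z₀) (ht : t₀ ≤ t)
    (hg : ∀ τ ∈ Icc t₀ t, 0 ≤ g τ) : 0 ≤ variationOfConstants ψ g t₀ z₀ t :=
  add_nonneg (mul_nonneg hz₀ (exp_pos _).le)
    (integral_nonneg ht fun τ hτ => mul_nonneg (hg τ hτ) (exp_pos _).le)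

theorem variationOfConstants_le (hψ : Continuous ψ) (hg : IntervalIntegrable g volume t₀ t)
    (hz₀ : 0 ≤ z₀) (ht : t₀ ≤ t) (hψ_nonneg : ∀ τ ∈ Icc t₀ t, 0 ≤ ψ τ)
    (hg_nonneg : ∀ τ ∈ Icc t₀ t, 0 ≤ g τ) :
    variationOfConstants ψ g t₀ z₀ t ≤ z₀ + ∫ τ in t₀..t, g τ := by
  have h₁ := mul_le_of_le_one_right hz₀ (exp_neg_integral_le_one ht hψ_nonneg)
  have h₂ := integral_mul_exp_neg_integral_le hψ hg hg ht le_rfl hψ_nonneg hg_nonneg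
    fun τ _ => by simp
  rw [variationOfConstants]
  linarith

theorem variationOfConstants_flow (hψ : Continuous ψ) {s : ℝ}
    (hg₀ : IntervalIntegrable g volume t₀ s) (hg : IntervalIntegrable g volume s t) :
    variationOfConstants ψ g t₀ z₀ t =
      variationOfConstants ψ g s (variationOfConstants ψ g t₀ z₀ s) t := by
  simp only [variationOfConstants]
  rw [add_mul, mul_assoc, exp_neg_integral_mul_exp_neg_integral hψ, ← integral_mul_const]
  simp only [mul_assoc, exp_neg_integral_mul_exp_neg_integral hψ]
  rw [add_assoc, integral_add_adjacent_intervals]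
  · exact hg₀.mul_continuousOn (continuous_exp_neg_integral hψ t).continuousOn
  · exact hg.mul_continuousOn (continuous_exp_neg_integral hψ t).continuousOn

theorem variationOfConstants_le_of_le_mul_add (hψ : Continuous ψ) {h : ℝ → ℝ} {s ε : ℝ}
    (hg₀ : IntervalIntegrable g volume t₀ s) (hg : IntervalIntegrable g volume s t)
    (hh : IntervalIntegrable h volume s t) (hz₀ : 0 ≤ z₀) (ht₀s : t₀ ≤ s) (hst : s ≤ t)
    (hε : 0 ≤ ε) (hψ_nonneg : ∀ τ ∈ Icc t₀ t, 0 ≤ ψ τ) (hg_nonneg : ∀ τ ∈ Icc t₀ s, 0 ≤ g τ)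
    (hh_nonneg : ∀ τ ∈ Icc s t, 0 ≤ h τ) (hgh : ∀ τ ∈ Icc s t, g τ ≤ ε * ψ τ + h τ) :
    variationOfConstants ψ g t₀ z₀ t ≤
      (z₀ + ∫ τ in t₀..s, g τ) * exp (-∫ l in s..t, ψ l) + ε + ∫ τ in s..t, h τ := by
  have hzs := variationOfConstants_le hψ hg₀ hz₀ ht₀s
    (fun τ hτ => hψ_nonneg τ ⟨hτ.1, hτ.2.trans hst⟩) hg_nonneg
  have htail := integral_mul_exp_neg_integral_le hψ hg hh hst hε
    (fun τ hτ => hψ_nonneg τ ⟨ht₀s.trans hτ.1, hτ.2⟩) hh_nonneg hgh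
  rw [variationOfConstants_flow hψ hg₀ hg, variationOfConstants]
  nlinarith [exp_pos (-∫ l in s..t, ψ l)]

end VariationOfConstants

theorem stmt_8 (ψ g₁ g₂ : ℝ → ℝ) (tbar : ℝ) (htbar : 0 ≤ tbar)
    (hψc : Continuous ψ) (hψpos : ∀ t ≥ tbar, 0 < ψ t)
    (hψdiv : Tendsto (fun t => ∫ τ in (0:ℝ)..t, ψ τ) atTop atTop)
    (hg₁c : Continuous g₁) (hg₂c : Continuous g₂)
    (hg₁nn : ∀ t ≥ (0:ℝ), 0 ≤ g₁ t) (hg₂nn : ∀ t ≥ (0:ℝ), 0 ≤ g₂ t)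
    (hg₁lim : Tendsto (fun t => g₁ t / ψ t) atTop (nhds 0))
    (hg₂int : MeasureTheory.IntegrableOn g₂ (Set.Ici (0:ℝ))) :
    ∀ ρ > (0:ℝ), ∀ t₀ ≥ tbar, ∀ α > (0:ℝ), ∃ T > (0:ℝ), ∀ z₀, 0 ≤ z₀ → z₀ < α →
      ∀ t ≥ t₀ + T,
        0 ≤ z₀ * Real.exp (-∫ τ in t₀..t, ψ τ) +
            ∫ τ in t₀..t, (g₁ τ + g₂ τ) * Real.exp (-∫ l in τ..t, ψ l) ∧
        z₀ * Real.exp (-∫ τ in t₀..t, ψ τ) +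
            ∫ τ in t₀..t, (g₁ τ + g₂ τ) * Real.exp (-∫ l in τ..t, ψ l) < ρ := by
  intro ρ hρ t₀ ht₀ α hα
  set g : ℝ → ℝ := fun τ => g₁ τ + g₂ τ
  have hgc : Continuous g := hg₁c.add hg₂c
  have hg₂_nonneg : ∀ τ ≥ t₀, 0 ≤ g₂ τ := fun τ hτ => hg₂nn τ (htbar.trans (ht₀.trans hτ))
  have hg_nonneg : ∀ τ ≥ t₀, 0 ≤ g τ := fun τ hτ =>
    add_nonneg (hg₁nn τ (htbar.trans (ht₀.trans hτ))) (hg₂_nonneg τ hτ)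
  obtain ⟨s, ht₀s, hg₁s, hg₂s⟩ : ∃ s, t₀ ≤ s ∧ (∀ τ ≥ s, g₁ τ / ψ τ < ρ / 4) ∧
      ∀ t ≥ s, |∫ τ in s..t, g₂ τ| < ρ / 4 :=
    ((eventually_ge_atTop t₀).and
      ((eventually_forall_ge_atTop.2 (hg₁lim.eventually_lt_const (by positivity))).and
      (eventually_forall_abs_integral_lt (hg₂int.mono_set Ioi_subset_Ici_self)
        (by positivity)))).exists
  set B := α + ∫ τ in t₀..s, g τ
  have hdecay : Tendsto (fun t => B * exp (-∫ l in s..t, ψ l)) atTop (𝓝 0) := by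
    simpa using (tendsto_exp_neg_integral_atTop hψc hψdiv s).const_mul B
  obtain ⟨t₁, ht₁⟩ := eventually_atTop.1
    ((hdecay.eventually_lt_const (half_pos hρ)).and (eventually_ge_atTop s))
  refine ⟨max (t₁ - t₀) 1, by positivity, fun z₀ hz₀ hz₀α t ht => ?_⟩
  obtain ⟨hBt, hst⟩ := ht₁ t (by linarith [le_max_left (t₁ - t₀) 1])
  show 0 ≤ variationOfConstants ψ g t₀ z₀ t ∧ variationOfConstants ψ g t₀ z₀ t < ρ
  refine ⟨variationOfConstants_nonneg hz₀ (ht₀s.trans hst) fun τ hτ => hg_nonneg τ hτ.1, ?_⟩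
  have hz := variationOfConstants_le_of_le_mul_add hψc (hgc.intervalIntegrable t₀ s)
    (hgc.intervalIntegrable s t) (hg₂c.intervalIntegrable s t) hz₀ ht₀s hst (by positivity)
    (fun τ hτ => (hψpos τ (ht₀.trans hτ.1)).le) (fun τ hτ => hg_nonneg τ hτ.1)
    (fun τ hτ => hg₂_nonneg τ (ht₀s.trans hτ.1)) fun τ hτ =>
      add_le_add_left ((div_lt_iff₀ (hψpos τ (ht₀.trans (ht₀s.trans hτ.1)))).1 (hg₁s τ hτ.1)).le _
  nlinarith [exp_pos (-∫ l in s..t, ψ l), (abs_lt.1 (hg₂s t hst)).2]
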